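/- arXiv:1803.08951 — 3 statements merged into one kernel-verified Lean document; each statement's English description precedes it below -/
import Mathlib

section
/- Let c ≤ d be reals, σ : [c,d] → ℝ continuous and strictly positive, and q : [c,d] → ℝ continuous. For γ ∈ ℝ define f_γ(x) := γ·σ(x)² − q(x). Suppose x̲ ∈ [c,d] is the unique minimizer of σ over [c,d], and suppose the limit ℓ := lim_{x→x̲} (q(x) − q(x̲))/(σ(x) − σ(x̲)) exists and is finite. Then there exists M > 0 such that for every γ > M, f_γ attains its minimum over [c,d] at x̲. -/
/-!
The difference quotient `(q x - q x̲) / (σ x - σ x̲)` is bounded above on `[c, d] \ {x̲}`: near `x̲`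
because it converges, and away from `x̲` because it is continuous there on a compact set. So
`q x - q x̲ ≤ B (σ x - σ x̲)` for some `B`, while
`γ (σ x ^ 2 - σ x̲ ^ 2) ≥ 2 γ σ x̲ (σ x - σ x̲)`, which beats this bound once `2 γ σ x̲ ≥ B`.
-/

open Set Filter Topology

theorem IsCompact.bddAbove_image_diff_singleton {X α : Type*} [TopologicalSpace X] [LinearOrder α]
    [TopologicalSpace α] [ClosedIciTopology α] {K : Set X} (hK : IsCompact K) {a : X}
    {h : X → α} (hh : ContinuousOn h (K \ {a}))
    (hbdd : IsBoundedUnder (· ≤ ·) (𝓝[K \ {a}] a) h) : BddAbove (h '' (K \ {a})) := by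
  obtain ⟨B, hB⟩ := hbdd
  obtain ⟨U, hUo, haU, hUB⟩ := mem_nhdsWithin.1 (eventually_map.1 hB)
  have : Nonempty α := ⟨B⟩
  have hfar : BddAbove (h '' (K \ U)) :=
    (hK.diff hUo).bddAbove_image (hh.mono (sdiff_subset_sdiff_right (singleton_subset_iff.2 haU)))
  refine (hfar.union ⟨B, forall_mem_image.2 fun x hx => hUB hx⟩).mono ?_
  rintro _ ⟨x, hx, rfl⟩
  by_cases hxU : x ∈ U
  · exact Or.inr ⟨x, ⟨hxU, hx⟩, rfl⟩
  · exact Or.inl ⟨x, ⟨hx.1, hxU⟩, rfl⟩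

theorem exists_sub_le_mul_sub_of_isBoundedUnder {X : Type*} [TopologicalSpace X] {K : Set X}
    (hK : IsCompact K) {a : X} {f g : X → ℝ} (hf : ContinuousOn f K) (hg : ContinuousOn g K)
    (hmin : ∀ x ∈ K, x ≠ a → g a < g x)
    (hbdd : IsBoundedUnder (· ≤ ·) (𝓝[K \ {a}] a) fun x => (f x - f a) / (g x - g a)) :
    ∃ B, ∀ x ∈ K, f x - f a ≤ B * (g x - g a) := by
  have hcont : ContinuousOn (fun x => (f x - f a) / (g x - g a)) (K \ {a}) :=
    ((hf.mono sdiff_subset).sub continuousOn_const).div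
      ((hg.mono sdiff_subset).sub continuousOn_const) fun x hx => (sub_pos.2 (hmin x hx.1 hx.2)).ne'
  obtain ⟨B, hB⟩ := hK.bddAbove_image_diff_singleton hcont hbdd
  refine ⟨B, fun x hx => ?_⟩
  rcases eq_or_ne x a with rfl | hxa
  · simp
  · exact (div_le_iff₀ (sub_pos.2 (hmin x hx hxa))).1 (hB ⟨x, ⟨hx, hxa⟩, rfl⟩)

theorem sub_le_mul_sq_sub_sq {s₀ s r₀ r B γ : ℝ} (hs : s₀ ≤ s)
    (hr : r - r₀ ≤ B * (s - s₀)) (hγ : 0 ≤ γ) (hB : B ≤ 2 * γ * s₀) :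
    γ * s₀ ^ 2 - r₀ ≤ γ * s ^ 2 - r := by
  nlinarith [mul_le_mul_of_nonneg_right hB (sub_nonneg.2 hs), mul_nonneg hγ (sq_nonneg (s - s₀))]

theorem stmt_0_general (c d : ℝ) (σ q : ℝ → ℝ)
    (hσc : ContinuousOn σ (Icc c d)) (hσpos : ∀ x ∈ Icc c d, 0 < σ x)
    (hqc : ContinuousOn q (Icc c d))
    (xm : ℝ) (hxm : xm ∈ Icc c d)
    (hmin : ∀ x ∈ Icc c d, x ≠ xm → σ xm < σ x)
    (ℓ : ℝ)
    (hlim : Tendsto (fun x => (q x - q xm) / (σ x - σ xm))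
      (nhdsWithin xm (Icc c d \ {xm})) (nhds ℓ)) :
    ∃ M > 0, ∀ γ > M, ∀ x ∈ Icc c d,
      γ * (σ xm)^2 - q xm ≤ γ * (σ x)^2 - q x := by
  obtain ⟨B, hB⟩ :=
    exists_sub_le_mul_sub_of_isBoundedUnder isCompact_Icc hqc hσc hmin hlim.isBoundedUnder_le
  have hσm : 0 < σ xm := hσpos xm hxm
  refine ⟨|B| / (2 * σ xm) + 1, by positivity, fun γ hγ x hx => ?_⟩
  have hγpos : 0 < γ := lt_trans (by positivity) hγ
  have hγB : |B| < γ * (2 * σ xm) :=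
    (div_lt_iff₀ (by positivity)).1 (lt_of_add_lt_of_nonneg_left hγ zero_le_one)
  have hσx : σ xm ≤ σ x := by
    rcases eq_or_ne x xm with rfl | hne
    · exact le_rfl
    · exact (hmin x hx hne).le
  exact sub_le_mul_sq_sub_sq hσx (hB x hx) hγpos.le (by linarith [le_abs_self B])

theorem stmt_0 (c d : ℝ) (hcd : c ≤ d) (σ q : ℝ → ℝ)
    (hσc : ContinuousOn σ (Icc c d)) (hσpos : ∀ x ∈ Icc c d, 0 < σ x)
    (hqc : ContinuousOn q (Icc c d))
    (xm : ℝ) (hxm : xm ∈ Icc c d)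
    (hmin : ∀ x ∈ Icc c d, x ≠ xm → σ xm < σ x)
    (ℓ : ℝ)
    (hlim : Tendsto (fun x => (q x - q xm) / (σ x - σ xm))
      (nhdsWithin xm (Icc c d \ {xm})) (nhds ℓ)) :
    ∃ M > 0, ∀ γ > M, ∀ x ∈ Icc c d,
      γ * (σ xm)^2 - q xm ≤ γ * (σ x)^2 - q x :=
  stmt_0_general c d σ q hσc hσpos hqc xm hxm hmin ℓ hlim
end

section
/- Let c ≤ d be reals, σ : [c,d] → ℝ continuous and strictly positive, and q : [c,d] → ℝ continuous. For γ ∈ ℝ define f_γ(x) := γ·σ(x)² − q(x). Suppose x̄ ∈ [c,d] is the unique maximizer of σ over [c,d], and suppose the limit L := lim_{x→x̄} (q(x) − q(x̄))/(σ(x) − σ(x̄)) exists and is finite. Then there exists m < 0 such that for every γ < m, f_γ attains its minimum over [c,d] at x̄. -/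
/-! The difference quotient `(q x - q x̄) / (σ x - σ x̄)`, extended by `L` at `x̄`, is continuous on
the compact interval, hence bounded by some `C`; so `|q x - q x̄| ≤ C (σ x̄ - σ x)`. Once
`γ σ(x̄) ≤ -C`, positivity of `σ` gives
`γ (σ x ^ 2 - σ x̄ ^ 2) = -γ (σ x̄ - σ x) (σ x̄ + σ x) ≥ C (σ x̄ - σ x) ≥ q x - q x̄`. -/

open Set Filter Topology

theorem exists_abs_sub_le_mul_abs_sub_of_tendsto_div {X : Type*} [TopologicalSpace X] [T1Space X]
    {s : Set X} (hs : IsCompact s) {σ q : X → ℝ} (hσ : ContinuousOn σ s) (hq : ContinuousOn q s)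
    {a : X} (ha : a ∈ s) (hσne : ∀ x ∈ s, x ≠ a → σ x ≠ σ a) {L : ℝ}
    (hlim : Tendsto (fun x => (q x - q a) / (σ x - σ a)) (𝓝[s \ {a}] a) (𝓝 L)) :
    ∃ C, 0 ≤ C ∧ ∀ x ∈ s, |q x - q a| ≤ C * |σ x - σ a| := by
  classical
  set g := fun x => (q x - q a) / (σ x - σ a)
  have hg : ContinuousOn (Function.update g a L) s := by
    refine continuousOn_update_iff.2 ⟨?_, fun _ => hlim⟩
    exact ((hq.mono sdiff_subset).sub continuousOn_const).div
      ((hσ.mono sdiff_subset).sub continuousOn_const)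
      fun x hx => sub_ne_zero.2 (hσne x hx.1 hx.2)
  obtain ⟨C, hC⟩ := hs.exists_bound_of_continuousOn hg
  refine ⟨C, (norm_nonneg _).trans (hC a ha), fun x hx => ?_⟩
  rcases eq_or_ne x a with rfl | hxa
  · simp
  have hgx : |g x| ≤ C := by simpa [hxa] using hC x hx
  calc |q x - q a| = |g x| * |σ x - σ a| := by
        rw [← abs_mul, div_mul_cancel₀ _ (sub_ne_zero.2 (hσne x hx hxa))]
    _ ≤ C * |σ x - σ a| := mul_le_mul_of_nonneg_right hgx (abs_nonneg _)

theorem sub_le_mul_sq_sub_sq_s1 {γ C s S u v : ℝ} (hs : 0 ≤ s) (hsS : s ≤ S) (hγ₀ : γ ≤ 0)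
    (hγ : γ * S ≤ -C) (huv : |u - v| ≤ C * (S - s)) :
    γ * S ^ 2 - v ≤ γ * s ^ 2 - u := by
  have hSs : 0 ≤ S - s := sub_nonneg.2 hsS
  nlinarith [le_abs_self (u - v), mul_nonneg (mul_nonneg (neg_nonneg.2 hγ₀) hs) hSs,
    mul_le_mul_of_nonneg_left hγ hSs]

theorem stmt_1_general (c d : ℝ) (σ q : ℝ → ℝ)
    (hσc : ContinuousOn σ (Icc c d)) (hσpos : ∀ x ∈ Icc c d, 0 < σ x)
    (hqc : ContinuousOn q (Icc c d))
    (xM : ℝ) (hxM : xM ∈ Icc c d)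
    (hmax : ∀ x ∈ Icc c d, x ≠ xM → σ x < σ xM)
    (L : ℝ)
    (hlim : Tendsto (fun x => (q x - q xM) / (σ x - σ xM))
      (nhdsWithin xM (Icc c d \ {xM})) (nhds L)) :
    ∃ m < (0 : ℝ), ∀ γ < m, ∀ x ∈ Icc c d,
      γ * (σ xM)^2 - q xM ≤ γ * (σ x)^2 - q x := by
  have hσM : 0 < σ xM := hσpos xM hxM
  obtain ⟨C, hC₀, hC⟩ := exists_abs_sub_le_mul_abs_sub_of_tendsto_div isCompact_Icc hσc hqc hxM
    (fun x hx hne => (hmax x hx hne).ne) hlim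
  have hm : -(C + 1) / σ xM < 0 := div_neg_of_neg_of_pos (by linarith) hσM
  refine ⟨_, hm, fun γ hγ x hx => ?_⟩
  have hσx : σ x ≤ σ xM := by
    rcases eq_or_ne x xM with rfl | hne
    exacts [le_rfl, (hmax x hx hne).le]
  have hγS : γ * σ xM ≤ -C := by
    rw [lt_div_iff₀ hσM] at hγ
    linarith
  refine sub_le_mul_sq_sub_sq_s1 (hσpos x hx).le hσx (hγ.trans hm).le hγS ?_
  simpa only [abs_sub_comm (σ x), abs_of_nonneg (sub_nonneg.2 hσx)] using hC x hx

theorem stmt_1 (c d : ℝ) (hcd : c ≤ d) (σ q : ℝ → ℝ)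
    (hσc : ContinuousOn σ (Icc c d)) (hσpos : ∀ x ∈ Icc c d, 0 < σ x)
    (hqc : ContinuousOn q (Icc c d))
    (xM : ℝ) (hxM : xM ∈ Icc c d)
    (hmax : ∀ x ∈ Icc c d, x ≠ xM → σ x < σ xM)
    (L : ℝ)
    (hlim : Tendsto (fun x => (q x - q xM) / (σ x - σ xM))
      (nhdsWithin xM (Icc c d \ {xM})) (nhds L)) :
    ∃ m < (0 : ℝ), ∀ γ < m, ∀ x ∈ Icc c d,
      γ * (σ xM)^2 - q xM ≤ γ * (σ x)^2 - q x :=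
  stmt_1_general c d σ q hσc hσpos hqc xM hxM hmax L hlim
end

section
/- Let c ≤ d be reals, σ : [c,d] → ℝ continuous with σ > 0, and q : [c,d] → ℝ. Let x̄ ∈ [c,d] satisfy σ(x̄) = max_{[c,d]} σ, and suppose there is M_G ≥ 0 such that |q(x) − q(x̄)| ≤ M_G · (σ(x̄) − σ(x)) for all x ∈ [c,d]. Then for every γ < −M_G/(2σ(x̲)), where σ(x̲) := min_{[c,d]} σ > 0, and every x ∈ [c,d] with σ(x) ≠ σ(x̄): γ·σ(x̄)² − q(x̄) < γ·σ(x)² − q(x). In particular x̄ minimizes x ↦ γσ(x)² − q(x) over [c,d]. -/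
open Set

/-- Since `γ S² - γ s² = γ (S + s) (S - s)` and `S + s ≥ 2m`, the quadratic gap is at most
`γ (2m) (S - s) < -M (S - s)`. -/
lemma mul_sq_sub_lt_mul_sq_sub_of_abs_sub_le {m s S M γ p P : ℝ} (hm : 0 < m) (hms : m ≤ s)
    (hsS : s < S) (hM : 0 ≤ M) (hγ : γ < -M / (2 * m)) (hp : |p - P| ≤ M * (S - s)) :
    γ * S ^ 2 - P < γ * s ^ 2 - p := by
  have hγneg : γ < 0 :=
    hγ.trans_le (div_nonpos_of_nonpos_of_nonneg (neg_nonpos.2 hM) (by positivity))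
  have hγm : γ * (2 * m) < -M := (lt_div_iff₀ (by positivity)).1 hγ
  have hpP : p - P ≤ M * (S - s) := le_of_abs_le hp
  have hsum : γ * (S + s) * (S - s) ≤ γ * (2 * m) * (S - s) :=
    mul_le_mul_of_nonneg_right (mul_le_mul_of_nonpos_left (by linarith) hγneg.le) (by linarith)
  have hgap : γ * (2 * m) * (S - s) < -M * (S - s) := mul_lt_mul_of_pos_right hγm (by linarith)
  calc γ * S ^ 2 - P = γ * s ^ 2 - p + ((p - P) + γ * (S + s) * (S - s)) := by ring
    _ < γ * s ^ 2 - p := add_lt_of_neg_right _ (by linarith)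

theorem stmt_15_general (c d : ℝ) (σ q : ℝ → ℝ)
    (hσpos : ∀ x ∈ Icc c d, 0 < σ x)
    (xm xM : ℝ) (hxm : xm ∈ Icc c d)
    (hmin : ∀ x ∈ Icc c d, σ xm ≤ σ x)
    (hmax : ∀ x ∈ Icc c d, σ x ≤ σ xM)
    (MG : ℝ) (hMG : 0 ≤ MG)
    (hq : ∀ x ∈ Icc c d, |q x - q xM| ≤ MG * (σ xM - σ x)) :
    ∀ γ < -MG / (2 * σ xm),
      (∀ x ∈ Icc c d, σ x ≠ σ xM →
        γ * (σ xM)^2 - q xM < γ * (σ x)^2 - q x) ∧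
      (∀ x ∈ Icc c d, γ * (σ xM)^2 - q xM ≤ γ * (σ x)^2 - q x) := by
  intro γ hγ
  have strict : ∀ x ∈ Icc c d, σ x ≠ σ xM → γ * (σ xM)^2 - q xM < γ * (σ x)^2 - q x :=
    fun x hx hne => mul_sq_sub_lt_mul_sq_sub_of_abs_sub_le (hσpos xm hxm) (hmin x hx)
      ((hmax x hx).lt_of_ne hne) hMG hγ (hq x hx)
  refine ⟨strict, fun x hx => ?_⟩
  by_cases hne : σ x = σ xM
  · have hqx : q x = q xM := by simpa [hne, sub_eq_zero] using hq x hx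
    rw [hne, hqx]
  · exact (strict x hx hne).le

theorem stmt_15 (c d : ℝ) (hcd : c ≤ d) (σ q : ℝ → ℝ)
    (hσc : ContinuousOn σ (Icc c d)) (hσpos : ∀ x ∈ Icc c d, 0 < σ x)
    (xm xM : ℝ) (hxm : xm ∈ Icc c d) (hxM : xM ∈ Icc c d)
    (hmin : ∀ x ∈ Icc c d, σ xm ≤ σ x)
    (hmax : ∀ x ∈ Icc c d, σ x ≤ σ xM)
    (MG : ℝ) (hMG : 0 ≤ MG)
    (hq : ∀ x ∈ Icc c d, |q x - q xM| ≤ MG * (σ xM - σ x)) :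
    ∀ γ < -MG / (2 * σ xm),
      (∀ x ∈ Icc c d, σ x ≠ σ xM →
        γ * (σ xM)^2 - q xM < γ * (σ x)^2 - q x) ∧
      (∀ x ∈ Icc c d, γ * (σ xM)^2 - q xM ≤ γ * (σ x)^2 - q x) :=
  stmt_15_general c d σ q hσpos xm xM hxm hmin hmax MG hMG hq
end
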